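/- The magic sum of any 16×16 Franklin square is divisible by 4, and there is no 16×16 Franklin square of magic sum 4. -/
import Mathlib


/-- The bent-diagonal offset function for a 16×16 square. -/
def bent16 (k : Fin 16) : Fin 16 := if (k : ℕ) < 8 then k else (15 : Fin 16) - k

/-- A 16×16 Franklin square of magic sum `S`: rows, columns and bent diagonals
sum to `S`, half-rows and half-columns sum to `S/2`, and 2×2 subsquares (on the
torus) sum to `S/4`. -/
def IsFranklin16 (s : ℕ) (M : Fin 16 → Fin 16 → ℕ) : Prop :=
  (∀ i, ∑ j, M i j = s) ∧ (∀ j, ∑ i, M i j = s) ∧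
  (∀ i, 2 * ∑ j ∈ Finset.univ.filter (fun j : Fin 16 => (j : ℕ) < 8), M i j = s) ∧
  (∀ i, 2 * ∑ j ∈ Finset.univ.filter (fun j : Fin 16 => 8 ≤ (j : ℕ)), M i j = s) ∧
  (∀ j, 2 * ∑ i ∈ Finset.univ.filter (fun i : Fin 16 => (i : ℕ) < 8), M i j = s) ∧
  (∀ j, 2 * ∑ i ∈ Finset.univ.filter (fun i : Fin 16 => 8 ≤ (i : ℕ)), M i j = s) ∧
  (∀ i j, 4 * (M i j + M i (j + 1) + M (i + 1) j + M (i + 1) (j + 1)) = s) ∧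
  (∀ c, ∑ k, M k (c + bent16 k) = s) ∧ (∀ c, ∑ k, M k (c - bent16 k) = s) ∧
  (∀ c, ∑ k, M (c + bent16 k) k = s) ∧ (∀ c, ∑ k, M (c - bent16 k) k = s)


private lemma sum16 (f : Fin 16 → ℕ) : ∑ j, f j = f 0 + f 1 + f 2 + f 3 + f 4 + f 5 + f 6 + f 7 + f 8 + f 9 + f 10 + f 11 + f 12 + f 13 + f 14 + f 15 := by
  rw [show (Finset.univ : Finset (Fin 16)) = {0,1,2,3,4,5,6,7,8,9,10,11,12,13,14,15} from by decide]
  simp [Finset.sum_insert, Finset.mem_insert]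
  ring

private lemma gstep {x0 x1 x2 y0 y1 y2 : ℕ} (h1 : x0 + x1 + y0 + y1 = 1)
    (h2 : x1 + x2 + y1 + y2 = 1) : x0 + y0 = x2 + y2 := by omega

private lemma bsplit {p q : ℕ} (h1 : p ≤ 1) (h2 : q ≤ 1) (h : p ≠ q) :
    (p = 0 ∧ q = 1) ∨ (p = 1 ∧ q = 0) := by omega

private lemma zval {xk yk zk : ℕ} (h1 : xk + yk = 0) (h2 : yk + zk = 1) : zk = 1 := by omega

private lemma shift1 {x0 x1 y0 y1 v : ℕ} (h : x0 + x1 + y0 + y1 = 1) (hp : x0 + y0 = v) :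
    x1 + y1 = 1 - v := by omega

private lemma caseA {c0 c1 c2 c3 c4 c5 c6 c7 c8 c9 c10 c11 c12 c13 c14 c15 : ℕ}
    (a0 : c0 + c1 = c1 + c2)
    (a1 : c1 + c2 = c2 + c3)
    (a2 : c2 + c3 = c3 + c4)
    (a3 : c3 + c4 = c4 + c5)
    (a4 : c4 + c5 = c5 + c6)
    (a5 : c5 + c6 = c6 + c7)
    (a6 : c6 + c7 = c7 + c8)
    (a7 : c7 + c8 = c8 + c9)
    (a8 : c8 + c9 = c9 + c10)
    (a9 : c9 + c10 = c10 + c11)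
    (a10 : c10 + c11 = c11 + c12)
    (a11 : c11 + c12 = c12 + c13)
    (a12 : c12 + c13 = c13 + c14)
    (a13 : c13 + c14 = c14 + c15)
    (a14 : c14 + c15 = c15 + c0)
    (a15 : c15 + c0 = c0 + c1)
    (hs : c0 + c1 + c2 + c3 + c4 + c5 + c6 + c7 + c8 + c9 + c10 + c11 + c12 + c13 + c14 + c15 = 4) : False := by omega

private lemma bnd {a a' b b' : ℕ} (h : a + a' + b + b' = 1) : a + b ≤ 1 := by omega

private lemma sA {a a' b b' : ℕ} (h : a + a' + b + b' = 1) (hp : a + b = 1) : a' + b' = 0 := by omega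

private lemma sB {a a' b b' : ℕ} (h : a + a' + b + b' = 1) (hp : a + b = 0) : a' + b' = 1 := by omega

private lemma finalE {w0 w1 w2 w3 w4 w5 w6 w7 w8 w9 w10 w11 w12 w13 w14 w15 : ℕ}
    (hz : w0 + w1 + w2 + w3 + w4 + w5 + w6 + w7 + w8 + w9 + w10 + w11 + w12 + w13 + w14 + w15 = 4)
    (t0 : w0 = 1) (t2 : w2 = 1) (t4 : w4 = 1) (t6 : w6 = 1) (t8 : w8 = 1) (t10 : w10 = 1) (t12 : w12 = 1) (t14 : w14 = 1) : False := by omega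

private lemma finalO {w0 w1 w2 w3 w4 w5 w6 w7 w8 w9 w10 w11 w12 w13 w14 w15 : ℕ}
    (hz : w0 + w1 + w2 + w3 + w4 + w5 + w6 + w7 + w8 + w9 + w10 + w11 + w12 + w13 + w14 + w15 = 4)
    (t1 : w1 = 1) (t3 : w3 = 1) (t5 : w5 = 1) (t7 : w7 = 1) (t9 : w9 = 1) (t11 : w11 = 1) (t13 : w13 = 1) (t15 : w15 = 1) : False := by omega

private lemma caseB {x0 x1 x2 x3 x4 x5 x6 x7 x8 x9 x10 x11 x12 x13 x14 x15 y0 y1 y2 y3 y4 y5 y6 y7 y8 y9 y10 y11 y12 y13 y14 y15 z0 z1 z2 z3 z4 z5 z6 z7 z8 z9 z10 z11 z12 z13 z14 z15 : ℕ}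
    (b0 : x0 + x1 + y0 + y1 = 1)
    (b1 : x1 + x2 + y1 + y2 = 1)
    (b2 : x2 + x3 + y2 + y3 = 1)
    (b3 : x3 + x4 + y3 + y4 = 1)
    (b4 : x4 + x5 + y4 + y5 = 1)
    (b5 : x5 + x6 + y5 + y6 = 1)
    (b6 : x6 + x7 + y6 + y7 = 1)
    (b7 : x7 + x8 + y7 + y8 = 1)
    (b8 : x8 + x9 + y8 + y9 = 1)
    (b9 : x9 + x10 + y9 + y10 = 1)
    (b10 : x10 + x11 + y10 + y11 = 1)
    (b11 : x11 + x12 + y11 + y12 = 1)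
    (b12 : x12 + x13 + y12 + y13 = 1)
    (b13 : x13 + x14 + y13 + y14 = 1)
    (b14 : x14 + x15 + y14 + y15 = 1)
    (b15 : x15 + x0 + y15 + y0 = 1)
    (c0 : y0 + y1 + z0 + z1 = 1)
    (c1 : y1 + y2 + z1 + z2 = 1)
    (c2 : y2 + y3 + z2 + z3 = 1)
    (c3 : y3 + y4 + z3 + z4 = 1)
    (c4 : y4 + y5 + z4 + z5 = 1)
    (c5 : y5 + y6 + z5 + z6 = 1)
    (c6 : y6 + y7 + z6 + z7 = 1)
    (c7 : y7 + y8 + z7 + z8 = 1)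
    (c8 : y8 + y9 + z8 + z9 = 1)
    (c9 : y9 + y10 + z9 + z10 = 1)
    (c10 : y10 + y11 + z10 + z11 = 1)
    (c11 : y11 + y12 + z11 + z12 = 1)
    (c12 : y12 + y13 + z12 + z13 = 1)
    (c13 : y13 + y14 + z13 + z14 = 1)
    (c14 : y14 + y15 + z14 + z15 = 1)
    (c15 : y15 + y0 + z15 + z0 = 1)
    (hz : z0 + z1 + z2 + z3 + z4 + z5 + z6 + z7 + z8 + z9 + z10 + z11 + z12 + z13 + z14 + z15 = 4)
    (hne : x0 + y0 ≠ y0 + z0) : False := by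
  have ex0 : x0 + y0 = x2 + y2 := gstep b0 b1
  have ey0 : y0 + z0 = y2 + z2 := gstep c0 c1
  have ex2 : x2 + y2 = x4 + y4 := gstep b2 b3
  have ey2 : y2 + z2 = y4 + z4 := gstep c2 c3
  have ex4 : x4 + y4 = x6 + y6 := gstep b4 b5
  have ey4 : y4 + z4 = y6 + z6 := gstep c4 c5
  have ex6 : x6 + y6 = x8 + y8 := gstep b6 b7
  have ey6 : y6 + z6 = y8 + z8 := gstep c6 c7
  have ex8 : x8 + y8 = x10 + y10 := gstep b8 b9
  have ey8 : y8 + z8 = y10 + z10 := gstep c8 c9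
  have ex10 : x10 + y10 = x12 + y12 := gstep b10 b11
  have ey10 : y10 + z10 = y12 + z12 := gstep c10 c11
  have ex12 : x12 + y12 = x14 + y14 := gstep b12 b13
  have ey12 : y12 + z12 = y14 + z14 := gstep c12 c13
  have ox1 : x1 + y1 = x3 + y3 := gstep b1 b2
  have oy1 : y1 + z1 = y3 + z3 := gstep c1 c2
  have ox3 : x3 + y3 = x5 + y5 := gstep b3 b4
  have oy3 : y3 + z3 = y5 + z5 := gstep c3 c4
  have ox5 : x5 + y5 = x7 + y7 := gstep b5 b6
  have oy5 : y5 + z5 = y7 + z7 := gstep c5 c6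
  have ox7 : x7 + y7 = x9 + y9 := gstep b7 b8
  have oy7 : y7 + z7 = y9 + z9 := gstep c7 c8
  have ox9 : x9 + y9 = x11 + y11 := gstep b9 b10
  have oy9 : y9 + z9 = y11 + z11 := gstep c9 c10
  have ox11 : x11 + y11 = x13 + y13 := gstep b11 b12
  have oy11 : y11 + z11 = y13 + z13 := gstep c11 c12
  have ox13 : x13 + y13 = x15 + y15 := gstep b13 b14
  have oy13 : y13 + z13 = y15 + z15 := gstep c13 c14
  rcases bsplit (bnd b0) (bnd c0) hne with ⟨hp, hq⟩ | ⟨hp, hq⟩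
  · have t0 : z0 = 1 := zval hp hq
    have px0 : x0 + y0 = 0 := hp
    have py0 : y0 + z0 = 1 := hq
    have px2 : x2 + y2 = 0 := ex0.symm.trans px0
    have py2 : y2 + z2 = 1 := ey0.symm.trans py0
    have t2 : z2 = 1 := zval px2 py2
    have px4 : x4 + y4 = 0 := ex2.symm.trans px2
    have py4 : y4 + z4 = 1 := ey2.symm.trans py2
    have t4 : z4 = 1 := zval px4 py4
    have px6 : x6 + y6 = 0 := ex4.symm.trans px4
    have py6 : y6 + z6 = 1 := ey4.symm.trans py4
    have t6 : z6 = 1 := zval px6 py6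
    have px8 : x8 + y8 = 0 := ex6.symm.trans px6
    have py8 : y8 + z8 = 1 := ey6.symm.trans py6
    have t8 : z8 = 1 := zval px8 py8
    have px10 : x10 + y10 = 0 := ex8.symm.trans px8
    have py10 : y10 + z10 = 1 := ey8.symm.trans py8
    have t10 : z10 = 1 := zval px10 py10
    have px12 : x12 + y12 = 0 := ex10.symm.trans px10
    have py12 : y12 + z12 = 1 := ey10.symm.trans py10
    have t12 : z12 = 1 := zval px12 py12
    have px14 : x14 + y14 = 0 := ex12.symm.trans px12
    have py14 : y14 + z14 = 1 := ey12.symm.trans py12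
    have t14 : z14 = 1 := zval px14 py14
    exact finalE hz t0 t2 t4 t6 t8 t10 t12 t14
  · have px1 : x1 + y1 = 0 := sA b0 hp
    have py1 : y1 + z1 = 1 := sB c0 hq
    have t1 : z1 = 1 := zval px1 py1
    have px3 : x3 + y3 = 0 := ox1.symm.trans px1
    have py3 : y3 + z3 = 1 := oy1.symm.trans py1
    have t3 : z3 = 1 := zval px3 py3
    have px5 : x5 + y5 = 0 := ox3.symm.trans px3
    have py5 : y5 + z5 = 1 := oy3.symm.trans py3
    have t5 : z5 = 1 := zval px5 py5
    have px7 : x7 + y7 = 0 := ox5.symm.trans px5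
    have py7 : y7 + z7 = 1 := oy5.symm.trans py5
    have t7 : z7 = 1 := zval px7 py7
    have px9 : x9 + y9 = 0 := ox7.symm.trans px7
    have py9 : y9 + z9 = 1 := oy7.symm.trans py7
    have t9 : z9 = 1 := zval px9 py9
    have px11 : x11 + y11 = 0 := ox9.symm.trans px9
    have py11 : y11 + z11 = 1 := oy9.symm.trans py9
    have t11 : z11 = 1 := zval px11 py11
    have px13 : x13 + y13 = 0 := ox11.symm.trans px11
    have py13 : y13 + z13 = 1 := oy11.symm.trans py11
    have t13 : z13 = 1 := zval px13 py13
    have px15 : x15 + y15 = 0 := ox13.symm.trans px13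
    have py15 : y15 + z15 = 1 := oy13.symm.trans py13
    have t15 : z15 = 1 := zval px15 py15
    exact finalO hz t1 t3 t5 t7 t9 t11 t13 t15

/-- The magic sum of any 16×16 Franklin square is divisible by 4, and there is
no 16×16 Franklin square of magic sum 4. -/
theorem franklin16_sum_div4_and_no_sum4 :
    (∀ (S : ℕ) (M : Fin 16 → Fin 16 → ℕ), IsFranklin16 S M → 4 ∣ S) ∧
    ¬ ∃ M : Fin 16 → Fin 16 → ℕ, IsFranklin16 4 M := by
  constructor
  · intro S M h
    exact ⟨_, (h.2.2.2.2.2.2.1 0 0).symm⟩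
  · rintro ⟨M, h⟩
    obtain ⟨hrow, hcol, -, -, -, -, hblk, -, -, -, -⟩ := h
    have h22 : ∀ i j : Fin 16, M i j + M i (j+1) + M (i+1) j + M (i+1) (j+1) = 1 := by
      intro i j; have := hblk i j; omega
    by_cases hA : ∀ i : Fin 16, M i 0 + M (i+1) 0 = M (i+1) 0 + M (i+1+1) 0
    · have hcE : M 0 0 + M 1 0 + M 2 0 + M 3 0 + M 4 0 + M 5 0 + M 6 0 + M 7 0 + M 8 0 + M 9 0 + M 10 0 + M 11 0 + M 12 0 + M 13 0 + M 14 0 + M 15 0 = 4 :=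
        (sum16 (fun i => M i 0)).symm.trans (hcol 0)
      have a0 : M 0 0 + M 1 0 = M 1 0 + M 2 0 := by simpa only [Fin.reduceAdd] using hA 0
      have a1 : M 1 0 + M 2 0 = M 2 0 + M 3 0 := by simpa only [Fin.reduceAdd] using hA 1
      have a2 : M 2 0 + M 3 0 = M 3 0 + M 4 0 := by simpa only [Fin.reduceAdd] using hA 2
      have a3 : M 3 0 + M 4 0 = M 4 0 + M 5 0 := by simpa only [Fin.reduceAdd] using hA 3
      have a4 : M 4 0 + M 5 0 = M 5 0 + M 6 0 := by simpa only [Fin.reduceAdd] using hA 4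
      have a5 : M 5 0 + M 6 0 = M 6 0 + M 7 0 := by simpa only [Fin.reduceAdd] using hA 5
      have a6 : M 6 0 + M 7 0 = M 7 0 + M 8 0 := by simpa only [Fin.reduceAdd] using hA 6
      have a7 : M 7 0 + M 8 0 = M 8 0 + M 9 0 := by simpa only [Fin.reduceAdd] using hA 7
      have a8 : M 8 0 + M 9 0 = M 9 0 + M 10 0 := by simpa only [Fin.reduceAdd] using hA 8
      have a9 : M 9 0 + M 10 0 = M 10 0 + M 11 0 := by simpa only [Fin.reduceAdd] using hA 9
      have a10 : M 10 0 + M 11 0 = M 11 0 + M 12 0 := by simpa only [Fin.reduceAdd] using hA 10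
      have a11 : M 11 0 + M 12 0 = M 12 0 + M 13 0 := by simpa only [Fin.reduceAdd] using hA 11
      have a12 : M 12 0 + M 13 0 = M 13 0 + M 14 0 := by simpa only [Fin.reduceAdd] using hA 12
      have a13 : M 13 0 + M 14 0 = M 14 0 + M 15 0 := by simpa only [Fin.reduceAdd] using hA 13
      have a14 : M 14 0 + M 15 0 = M 15 0 + M 0 0 := by simpa only [Fin.reduceAdd] using hA 14
      have a15 : M 15 0 + M 0 0 = M 0 0 + M 1 0 := by simpa only [Fin.reduceAdd] using hA 15
      exact caseA a0 a1 a2 a3 a4 a5 a6 a7 a8 a9 a10 a11 a12 a13 a14 a15 hcE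
    · push_neg at hA
      obtain ⟨i, hne⟩ := hA
      have b0 : M i 0 + M i 1 + M (i+1) 0 + M (i+1) 1 = 1 := by simpa only [Fin.reduceAdd] using h22 i 0
      have b1 : M i 1 + M i 2 + M (i+1) 1 + M (i+1) 2 = 1 := by simpa only [Fin.reduceAdd] using h22 i 1
      have b2 : M i 2 + M i 3 + M (i+1) 2 + M (i+1) 3 = 1 := by simpa only [Fin.reduceAdd] using h22 i 2
      have b3 : M i 3 + M i 4 + M (i+1) 3 + M (i+1) 4 = 1 := by simpa only [Fin.reduceAdd] using h22 i 3
      have b4 : M i 4 + M i 5 + M (i+1) 4 + M (i+1) 5 = 1 := by simpa only [Fin.reduceAdd] using h22 i 4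
      have b5 : M i 5 + M i 6 + M (i+1) 5 + M (i+1) 6 = 1 := by simpa only [Fin.reduceAdd] using h22 i 5
      have b6 : M i 6 + M i 7 + M (i+1) 6 + M (i+1) 7 = 1 := by simpa only [Fin.reduceAdd] using h22 i 6
      have b7 : M i 7 + M i 8 + M (i+1) 7 + M (i+1) 8 = 1 := by simpa only [Fin.reduceAdd] using h22 i 7
      have b8 : M i 8 + M i 9 + M (i+1) 8 + M (i+1) 9 = 1 := by simpa only [Fin.reduceAdd] using h22 i 8
      have b9 : M i 9 + M i 10 + M (i+1) 9 + M (i+1) 10 = 1 := by simpa only [Fin.reduceAdd] using h22 i 9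
      have b10 : M i 10 + M i 11 + M (i+1) 10 + M (i+1) 11 = 1 := by simpa only [Fin.reduceAdd] using h22 i 10
      have b11 : M i 11 + M i 12 + M (i+1) 11 + M (i+1) 12 = 1 := by simpa only [Fin.reduceAdd] using h22 i 11
      have b12 : M i 12 + M i 13 + M (i+1) 12 + M (i+1) 13 = 1 := by simpa only [Fin.reduceAdd] using h22 i 12
      have b13 : M i 13 + M i 14 + M (i+1) 13 + M (i+1) 14 = 1 := by simpa only [Fin.reduceAdd] using h22 i 13
      have b14 : M i 14 + M i 15 + M (i+1) 14 + M (i+1) 15 = 1 := by simpa only [Fin.reduceAdd] using h22 i 14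
      have b15 : M i 15 + M i 0 + M (i+1) 15 + M (i+1) 0 = 1 := by simpa only [Fin.reduceAdd] using h22 i 15
      have c0 : M (i+1) 0 + M (i+1) 1 + M (i+1+1) 0 + M (i+1+1) 1 = 1 := by simpa only [Fin.reduceAdd] using h22 (i+1) 0
      have c1 : M (i+1) 1 + M (i+1) 2 + M (i+1+1) 1 + M (i+1+1) 2 = 1 := by simpa only [Fin.reduceAdd] using h22 (i+1) 1
      have c2 : M (i+1) 2 + M (i+1) 3 + M (i+1+1) 2 + M (i+1+1) 3 = 1 := by simpa only [Fin.reduceAdd] using h22 (i+1) 2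
      have c3 : M (i+1) 3 + M (i+1) 4 + M (i+1+1) 3 + M (i+1+1) 4 = 1 := by simpa only [Fin.reduceAdd] using h22 (i+1) 3
      have c4 : M (i+1) 4 + M (i+1) 5 + M (i+1+1) 4 + M (i+1+1) 5 = 1 := by simpa only [Fin.reduceAdd] using h22 (i+1) 4
      have c5 : M (i+1) 5 + M (i+1) 6 + M (i+1+1) 5 + M (i+1+1) 6 = 1 := by simpa only [Fin.reduceAdd] using h22 (i+1) 5
      have c6 : M (i+1) 6 + M (i+1) 7 + M (i+1+1) 6 + M (i+1+1) 7 = 1 := by simpa only [Fin.reduceAdd] using h22 (i+1) 6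
      have c7 : M (i+1) 7 + M (i+1) 8 + M (i+1+1) 7 + M (i+1+1) 8 = 1 := by simpa only [Fin.reduceAdd] using h22 (i+1) 7
      have c8 : M (i+1) 8 + M (i+1) 9 + M (i+1+1) 8 + M (i+1+1) 9 = 1 := by simpa only [Fin.reduceAdd] using h22 (i+1) 8
      have c9 : M (i+1) 9 + M (i+1) 10 + M (i+1+1) 9 + M (i+1+1) 10 = 1 := by simpa only [Fin.reduceAdd] using h22 (i+1) 9
      have c10 : M (i+1) 10 + M (i+1) 11 + M (i+1+1) 10 + M (i+1+1) 11 = 1 := by simpa only [Fin.reduceAdd] using h22 (i+1) 10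
      have c11 : M (i+1) 11 + M (i+1) 12 + M (i+1+1) 11 + M (i+1+1) 12 = 1 := by simpa only [Fin.reduceAdd] using h22 (i+1) 11
      have c12 : M (i+1) 12 + M (i+1) 13 + M (i+1+1) 12 + M (i+1+1) 13 = 1 := by simpa only [Fin.reduceAdd] using h22 (i+1) 12
      have c13 : M (i+1) 13 + M (i+1) 14 + M (i+1+1) 13 + M (i+1+1) 14 = 1 := by simpa only [Fin.reduceAdd] using h22 (i+1) 13
      have c14 : M (i+1) 14 + M (i+1) 15 + M (i+1+1) 14 + M (i+1+1) 15 = 1 := by simpa only [Fin.reduceAdd] using h22 (i+1) 14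
      have c15 : M (i+1) 15 + M (i+1) 0 + M (i+1+1) 15 + M (i+1+1) 0 = 1 := by simpa only [Fin.reduceAdd] using h22 (i+1) 15
      have hrE : M (i+1+1) 0 + M (i+1+1) 1 + M (i+1+1) 2 + M (i+1+1) 3 + M (i+1+1) 4 + M (i+1+1) 5 + M (i+1+1) 6 + M (i+1+1) 7 + M (i+1+1) 8 + M (i+1+1) 9 + M (i+1+1) 10 + M (i+1+1) 11 + M (i+1+1) 12 + M (i+1+1) 13 + M (i+1+1) 14 + M (i+1+1) 15 = 4 :=
        (sum16 (M (i+1+1))).symm.trans (hrow (i+1+1))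
      have hne' : M i 0 + M (i+1) 0 ≠ M (i+1) 0 + M (i+1+1) 0 := hne
      exact caseB b0 b1 b2 b3 b4 b5 b6 b7 b8 b9 b10 b11 b12 b13 b14 b15 c0 c1 c2 c3 c4 c5 c6 c7 c8 c9 c10 c11 c12 c13 c14 c15 hrE hne'
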